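/- Let α ≥ ω₁ be a regular cardinal and 0 < m < n < ω. Then there exists a quotient prime map g : C⁻(α,n) → C⁻(α,m), i.e., a continuous surjective quotient map with g⁻¹(∞) = {∞}. -/

import Mathlib

/-!
Forgetting the first coordinate maps `C⁻(α, k+1)` onto `C⁻(α, k)` and sends only `∞` to `∞`.
Every slice of the preimage of a neighbourhood `U` of `∞` is `U` itself, so the preimage is open
exactly when `U` is: the map is a quotient map. Composing `n - m` of these maps gives `g`.
-/

universe u v

/-- `CIdx K m` represents the set `αⁿ` for `n = m+1`, where `K` plays the role of `α`. -/
def CIdx (K : Type u) : ℕ → Type u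
  | 0 => K
  | m + 1 => K × CIdx K m

/-- Given a subset `U` of `(α × αⁿ) ∪ {∞}` and `ξ`, the set `{x ∈ αⁿ : (ξ,x) ∈ U} ∪ {∞}`. -/
def cslice {K J : Type u} (U : Set (Option (K × J))) (ξ : K) : Set (Option J) :=
  insert none (Option.some '' {x : J | Option.some (ξ, x) ∈ U})

/-- The openness predicate of the space `C⁻(α, m+1)`. -/
def CIsOpen (K : Type u) : (m : ℕ) → Set (Option (CIdx K m)) → Prop
  | 0, U => none ∈ U → Cardinal.mk ((Option.some ⁻¹' U)ᶜ : Set K) < Cardinal.mk K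
  | m + 1, U => none ∈ U →
      Cardinal.mk (({ξ : K | CIsOpen K m (cslice U ξ)}ᶜ : Set K)) < Cardinal.mk K

theorem cslice_mono {K J : Type u} {U V : Set (Option (K × J))} (h : U ⊆ V) (ξ : K) :
    cslice U ξ ⊆ cslice V ξ := by
  intro z hz
  rcases hz with hz | hz
  · exact Or.inl hz
  · rcases hz with ⟨x, hx, rfl⟩
    exact Or.inr ⟨x, h hx, rfl⟩

theorem none_mem_cslice {K J : Type u} (U : Set (Option (K × J))) (ξ : K) :
    none ∈ cslice U ξ := Set.mem_insert _ _

theorem cisOpen_of_none_not_mem (K : Type u) (m : ℕ) (U : Set (Option (CIdx K m)))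
    (h : none ∉ U) : CIsOpen K m U := by
  cases m with
  | zero => exact fun hU => absurd hU h
  | succ m => exact fun hU => absurd hU h

theorem cisOpen_mono (K : Type u) (m : ℕ) :
    ∀ U V : Set (Option (CIdx K m)), CIsOpen K m U → U ⊆ V → (none ∈ V → none ∈ U) →
      CIsOpen K m V := by
  induction m with
  | zero =>
    intro U V hU hUV hnone hV
    refine lt_of_le_of_lt (Cardinal.mk_le_mk_of_subset ?_) (hU (hnone hV))
    intro k hk hU'
    exact hk (hUV hU')
  | succ m ih =>
    intro U V hU hUV hnone hV
    refine lt_of_le_of_lt (Cardinal.mk_le_mk_of_subset ?_) (hU (hnone hV))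
    intro ξ hξ hopen
    exact hξ (ih _ _ hopen (cslice_mono hUV ξ) (fun _ => none_mem_cslice U ξ))

theorem cslice_univ {K J : Type u} (ξ : K) :
    cslice (Set.univ : Set (Option (K × J))) ξ = Set.univ := by
  ext z
  cases z with
  | none => simp [cslice]
  | some j => simp [cslice]

theorem cisOpen_univ (K : Type u) [Nonempty K] (m : ℕ) : CIsOpen K m Set.univ := by
  cases m with
  | zero =>
    intro _
    have h0 : ((Option.some ⁻¹' (Set.univ : Set (Option K)))ᶜ : Set K) = ∅ := by simp
    show Cardinal.mk ((Option.some ⁻¹' (Set.univ : Set (Option K)))ᶜ : Set K) < Cardinal.mk K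
    rw [h0, Cardinal.mk_emptyCollection]
    exact Cardinal.mk_ne_zero K |>.bot_lt
  | succ m =>
    intro _
    have h : ({ξ : K | CIsOpen K m (cslice (Set.univ : Set (Option (CIdx K (m+1)))) ξ)}ᶜ : Set K)
        = ∅ := by
      ext ξ
      simp only [Set.mem_compl_iff, Set.mem_setOf_eq, Set.mem_empty_iff_false, iff_false, not_not]
      show CIsOpen K m (cslice (Set.univ : Set (Option (K × CIdx K m))) ξ)
      rw [cslice_univ]
      exact cisOpen_univ K m
    rw [h, Cardinal.mk_emptyCollection]
    exact Cardinal.mk_ne_zero K |>.bot_lt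

theorem some_mem_cslice_iff {K J : Type u} (U : Set (Option (K × J))) (ξ : K) (x : J) :
    some x ∈ cslice U ξ ↔ some (ξ, x) ∈ U := by
  simp [cslice]

theorem cslice_inter {K J : Type u} (U V : Set (Option (K × J))) (ξ : K) :
    cslice (U ∩ V) ξ = cslice U ξ ∩ cslice V ξ := by
  ext z
  cases z with
  | none => simp [none_mem_cslice]
  | some x => simp [some_mem_cslice_iff]

theorem cisOpen_inter (K : Type u) [Infinite K] (m : ℕ) :
    ∀ U V : Set (Option (CIdx K m)), CIsOpen K m U → CIsOpen K m V →
      CIsOpen K m (U ∩ V) := by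
  induction m with
  | zero =>
    intro U V hU hV h
    have hsub : ((Option.some ⁻¹' (U ∩ V))ᶜ : Set K) ⊆
        (Option.some ⁻¹' U)ᶜ ∪ (Option.some ⁻¹' V)ᶜ := by
      intro k hk
      by_cases h1 : some k ∈ U
      · by_cases h2 : some k ∈ V
        · exact (hk (And.intro h1 h2)).elim
        · exact Or.inr h2
      · exact Or.inl h1
    refine lt_of_le_of_lt (Cardinal.mk_le_mk_of_subset hsub) ?_
    refine lt_of_le_of_lt (Cardinal.mk_union_le _ _) ?_
    exact Cardinal.add_lt_of_lt (Cardinal.aleph0_le_mk K) (hU h.1) (hV h.2)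
  | succ m ih =>
    intro U V hU hV h
    have hsub : ({ξ : K | CIsOpen K m (cslice (U ∩ V) ξ)}ᶜ : Set K) ⊆
        {ξ : K | CIsOpen K m (cslice U ξ)}ᶜ ∪ {ξ : K | CIsOpen K m (cslice V ξ)}ᶜ := by
      intro ξ hξ
      by_contra hc
      have e : cslice (U ∩ V) ξ = cslice U ξ ∩ cslice V ξ := cslice_inter U V ξ
      have hi : CIsOpen K m (cslice (U ∩ V) ξ) :=
        e ▸ ih _ _ (Classical.byContradiction fun h1 => hc (Or.inl h1))
          (Classical.byContradiction fun h2 => hc (Or.inr h2))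
      exact hξ hi
    refine lt_of_le_of_lt (Cardinal.mk_le_mk_of_subset hsub) ?_
    refine lt_of_le_of_lt (Cardinal.mk_union_le _ _) ?_
    exact Cardinal.add_lt_of_lt (Cardinal.aleph0_le_mk K) (hU h.1) (hV h.2)

theorem cisOpen_sUnion (K : Type u) (m : ℕ) (S : Set (Set (Option (CIdx K m))))
    (hS : ∀ U ∈ S, CIsOpen K m U) : CIsOpen K m (⋃₀ S) := by
  by_cases h : none ∈ ⋃₀ S
  · obtain ⟨U, hUS, hU⟩ := h
    exact cisOpen_mono K m U _ (hS U hUS) (Set.subset_sUnion_of_mem hUS) (fun _ => hU)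
  · exact cisOpen_of_none_not_mem _ _ _ h

/-- The space `C⁻(α, m+1)` from the paper (so `m = 0` gives `C(α)` itself);
`K` plays the role of the set of ordinals `< α` and `none` plays the role of `∞`. -/
def CTop (K : Type u) [Infinite K] (m : ℕ) : TopologicalSpace (Option (CIdx K m)) where
  IsOpen := CIsOpen K m
  isOpen_univ := cisOpen_univ K m
  isOpen_inter := cisOpen_inter K m
  isOpen_sUnion := cisOpen_sUnion K m

instance instCTop (K : Type u) [Infinite K] (m : ℕ) : TopologicalSpace (Option (CIdx K m)) :=
  CTop K m

def dropHead (K : Type u) (q : ℕ) : Option (CIdx K (q + 1)) → Option (CIdx K q) :=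
  Option.map Prod.snd

theorem dropHead_preimage_none (K : Type u) (q : ℕ) : dropHead K q ⁻¹' {none} = {none} := by
  ext (_ | x) <;> simp [dropHead, Option.map]

theorem cslice_preimage_dropHead {K : Type u} {q : ℕ} {U : Set (Option (CIdx K q))}
    (hU : none ∈ U) (ξ : K) : cslice (dropHead K q ⁻¹' U) ξ = U := by
  ext (_ | x)
  · simp only [none_mem_cslice, hU]
  · rw [some_mem_cslice_iff]
    rfl

theorem Cardinal.mk_compl_setOf_const_lt_iff {K : Type u} [Nonempty K] (P : Prop) :
    Cardinal.mk (({_ξ : K | P}ᶜ : Set K)) < Cardinal.mk K ↔ P := by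
  by_cases hP : P
  · simpa [hP] using (Cardinal.mk_ne_zero K).bot_lt
  · simp [hP]

section

variable (K : Type u) [Infinite K]

theorem isOpen_succ_iff {q : ℕ} (U : Set (Option (CIdx K (q + 1)))) :
    IsOpen U ↔ (none ∈ U →
      Cardinal.mk (({ξ : K | IsOpen (cslice U ξ)}ᶜ : Set K)) < Cardinal.mk K) :=
  Iff.rfl

theorem isOpen_iff_of_cslice_eq {q : ℕ} {U : Set (Option (CIdx K (q + 1)))}
    {V : Set (Option (CIdx K q))} (hslice : ∀ ξ, cslice U ξ = V) :
    IsOpen U ↔ (none ∈ U → IsOpen V) := by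
  simp only [isOpen_succ_iff, hslice, Cardinal.mk_compl_setOf_const_lt_iff]

theorem isOpen_preimage_dropHead_iff (q : ℕ) (U : Set (Option (CIdx K q))) :
    IsOpen (dropHead K q ⁻¹' U) ↔ IsOpen U := by
  by_cases hU : none ∈ U
  · exact (isOpen_iff_of_cslice_eq K (cslice_preimage_dropHead hU)).trans (imp_iff_right hU)
  · have hU' : none ∉ dropHead K q ⁻¹' U := hU
    exact iff_of_true (cisOpen_of_none_not_mem K _ _ hU') (cisOpen_of_none_not_mem K _ _ hU)

theorem isQuotientMap_dropHead (q : ℕ) : Topology.IsQuotientMap (dropHead K q) := by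
  refine ⟨.of_isOpen_preimage_iff_isOpen (isOpen_preimage_dropHead_iff K q), ?_⟩
  obtain ⟨ξ⟩ := ‹Infinite K›.nonempty
  rintro (_ | x)
  exacts [⟨none, rfl⟩, ⟨some (ξ, x), rfl⟩]

theorem exists_isQuotientMap_preimage_none {p q : ℕ} (hpq : p ≤ q) :
    ∃ g : Option (CIdx K q) → Option (CIdx K p),
      Topology.IsQuotientMap g ∧ g ⁻¹' {none} = {none} := by
  induction q, hpq using Nat.le_induction with
  | base => exact ⟨id, .id, rfl⟩
  | succ q _ ih =>
    obtain ⟨g, hg, hg_none⟩ := ih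
    refine ⟨g ∘ dropHead K q, hg.comp (isQuotientMap_dropHead K q), ?_⟩
    rw [Set.preimage_comp, hg_none, dropHead_preimage_none]

end

/-- The indices are shifted: `p < q` stands for `m = p+1 < n = q+1`. -/
theorem stmt12_general (K : Type u) [Infinite K] (p q : ℕ) (hpq : p < q) :
    ∃ g : Option (CIdx K q) → Option (CIdx K p),
      Continuous g ∧ Topology.IsQuotientMap g ∧ g ⁻¹' {none} = {none} := by
  obtain ⟨g, hg, hg_none⟩ := exists_isQuotientMap_preimage_none K hpq.le
  exact ⟨g, hg.continuous, hg, hg_none⟩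

/-- for a regular cardinal `α ≥ ω₁` (the cardinality of `K`) and `0 < m < n < ω`,
there is a quotient prime map `g : C⁻(α,n) → C⁻(α,m)`.  Here `CTop K p` (the instance topology
on `Option (CIdx K p)`) is `C⁻(α, p+1)` and `none` is the point `∞`, so the indices `p < q`
below correspond to `m = p+1 < n = q+1`. -/
theorem stmt12 (K : Type u) [Infinite K] (hreg : (Cardinal.mk K).IsRegular)
    (hω1 : Cardinal.aleph 1 ≤ Cardinal.mk K) (p q : ℕ) (hpq : p < q) :
    ∃ g : Option (CIdx K q) → Option (CIdx K p),
      Continuous g ∧ Topology.IsQuotientMap g ∧ g ⁻¹' {none} = {none} :=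
  stmt12_general K p q hpq
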